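/- Let P be a curve in ℝ^d, let P' be a contiguous subcurve of P, and let Π' be a (k,γ)-simplification of P'. Then for every curve Π of length at most k, dFr(P',Π') ≤ γ·dFr(P,Π). -/

import Mathlib

noncomputable section

abbrev Pt (d : ℕ) : Type := EuclideanSpace ℝ (Fin d)

/-- Cost contribution of a single pair of blocks: the maximum distance between a point
of `A` and a point of `B` (0 if one of them is empty). -/
def pairCost {d : ℕ} (A B : List (Pt d)) : ℝ :=
  (A.map fun p => (B.map fun q => dist p q).foldr max 0).foldr max 0

/-- `ω` is a paired walk along `P` and `Q`: the first components partition `P` into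
consecutive nonempty blocks, the second components partition `Q`, and in each pair at
least one block is a single point. -/
def IsPairedWalk {d : ℕ} (ω : List (List (Pt d) × List (Pt d))) (P Q : List (Pt d)) : Prop :=
  (ω.map Prod.fst).flatten = P ∧ (ω.map Prod.snd).flatten = Q ∧
    ∀ pr ∈ ω, pr.1 ≠ [] ∧ pr.2 ≠ [] ∧ (pr.1.length = 1 ∨ pr.2.length = 1)

/-- The cost of a paired walk: the maximum over its pairs of the maximum distance between
matched points. -/
def walkCost {d : ℕ} (ω : List (List (Pt d) × List (Pt d))) : ℝ :=
  (ω.map fun pr => pairCost pr.1 pr.2).foldr max 0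

/-- The discrete Fréchet distance: the minimum cost over all paired walks along `P` and `Q`. -/
def dFr {d : ℕ} (P Q : List (Pt d)) : ℝ :=
  sInf {c : ℝ | ∃ ω, IsPairedWalk ω P Q ∧ walkCost ω = c}

/-- `Γ` is a `(k,γ)`-simplification of `P`: a (nonempty) curve of length at most `k` such
that `dFr P Γ ≤ γ * dFr P Γ'` for every (nonempty) curve `Γ'` of length at most `k`. -/
def IsSimplification {d : ℕ} (k : ℕ) (γ : ℝ) (P Γ : List (Pt d)) : Prop :=
  Γ ≠ [] ∧ Γ.length ≤ k ∧
    ∀ Γ' : List (Pt d), Γ' ≠ [] → Γ'.length ≤ k → dFr P Γ ≤ γ * dFr P Γ'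

-- basic foldr max lemmas
lemma le_foldr_max (l : List ℝ) (a : ℝ) : a ≤ l.foldr max a := by
  induction l with
  | nil => simp
  | cons x t ih => exact le_trans ih (le_max_right _ _)

lemma foldr_max_mono {l : List ℝ} {a b : ℝ} (h : a ≤ b) : l.foldr max a ≤ l.foldr max b := by
  induction l with
  | nil => simpa
  | cons x t ih => exact max_le_max le_rfl ih

lemma mem_le_foldr_max {l : List ℝ} {x : ℝ} (a : ℝ) (h : x ∈ l) : x ≤ l.foldr max a := by
  induction l with
  | nil => simp at h
  | cons y t ih =>
    rcases List.mem_cons.mp h with h | h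
    · simp [h, le_max_left]
    · exact le_trans (ih h) (le_max_right _ _)

lemma pairCost_nonneg {d : ℕ} (A B : List (Pt d)) : 0 ≤ pairCost A B :=
  le_foldr_max _ _

lemma walkCost_nonneg {d : ℕ} (ω : List (List (Pt d) × List (Pt d))) : 0 ≤ walkCost ω :=
  le_foldr_max _ _

lemma walkCost_cons {d : ℕ} (pr : List (Pt d) × List (Pt d)) (ω : List (List (Pt d) × List (Pt d))) :
    walkCost (pr :: ω) = max (pairCost pr.1 pr.2) (walkCost ω) := rfl

lemma pairCost_suffix {d : ℕ} (X A B : List (Pt d)) : pairCost A B ≤ pairCost (X ++ A) B := by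
  unfold pairCost
  rw [List.map_append, List.foldr_append]
  exact le_foldr_max _ _

lemma pairCost_prefix {d : ℕ} (A X B : List (Pt d)) : pairCost A B ≤ pairCost (A ++ X) B := by
  unfold pairCost
  rw [List.map_append, List.foldr_append]
  exact foldr_max_mono (le_foldr_max _ _)

lemma dist_le_pairCost {d : ℕ} {A B : List (Pt d)} {p q : Pt d} (hp : p ∈ A) (hq : q ∈ B) :
    dist p q ≤ pairCost A B := by
  unfold pairCost
  refine le_trans ?_ (mem_le_foldr_max 0 (List.mem_map_of_mem hp))
  exact mem_le_foldr_max 0 (List.mem_map_of_mem hq)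

lemma exists_walk {d : ℕ} (P Q : List (Pt d)) (hP : P ≠ []) (hQ : Q ≠ []) :
    ∃ ω, IsPairedWalk ω P Q := by
  rcases P with _ | ⟨p, Pt⟩; · exact absurd rfl hP
  rcases Pt with _ | ⟨p2, Pt2⟩
  · exact ⟨[([p], Q)], by simp [IsPairedWalk, hQ]⟩
  rcases Q with _ | ⟨q, Qt⟩; · exact absurd rfl hQ
  rcases Qt with _ | ⟨q2, Qt2⟩
  · exact ⟨[(p :: p2 :: Pt2, [q])], by simp [IsPairedWalk]⟩
  refine ⟨[((p :: p2 :: Pt2).dropLast, [q]),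
          ([(p :: p2 :: Pt2).getLast (by simp)], q2 :: Qt2)], ?_, ?_, ?_⟩
  · simpa using List.dropLast_append_getLast (l := p :: p2 :: Pt2) (by simp)
  · simp
  · intro pr hpr
    rcases List.mem_cons.mp hpr with h | h
    · subst h; refine ⟨by simp, by simp, Or.inr rfl⟩
    · simp only [List.mem_singleton] at h; subst h; exact ⟨by simp, by simp, Or.inl rfl⟩

lemma foldr_max_le_of_forall {l : List ℝ} {a : ℝ} (h : ∀ x ∈ l, x ≤ a) : l.foldr max a ≤ a := by
  induction l with
  | nil => simp
  | cons x t ih =>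
    exact max_le (h x (List.mem_cons_self)) (ih fun y hy => h y (List.mem_cons_of_mem _ hy))

lemma dFr_le_walkCost {d : ℕ} {ω : List (List (Pt d) × List (Pt d))} {P Q : List (Pt d)}
    (h : IsPairedWalk ω P Q) : dFr P Q ≤ walkCost ω := by
  apply csInf_le
  · exact ⟨0, by rintro c ⟨ω', _, rfl⟩; exact walkCost_nonneg ω'⟩
  · exact ⟨ω, h, rfl⟩

lemma dFr_nonneg {d : ℕ} (P Q : List (Pt d)) (hP : P ≠ []) (hQ : Q ≠ []) : 0 ≤ dFr P Q := by
  obtain ⟨ω, hω⟩ := exists_walk P Q hP hQ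
  exact le_csInf ⟨_, ω, hω, rfl⟩ (by rintro c ⟨ω', _, rfl⟩; exact walkCost_nonneg ω')

lemma dist_head_le_dFr {d : ℕ} {P Q : List (Pt d)} (hP : P ≠ []) (hQ : Q ≠ []) :
    dist (P.head hP) (Q.head hQ) ≤ dFr P Q := by
  obtain ⟨ω0, hω0⟩ := exists_walk P Q hP hQ
  refine le_csInf ⟨_, ω0, hω0, rfl⟩ ?_
  rintro c ⟨ω, ⟨h1, h2, h3⟩, rfl⟩
  rcases ω with _ | ⟨pr, rest⟩
  · simp at h1; exact (hP h1).elim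
  obtain ⟨hne1, hne2, -⟩ := h3 pr (List.mem_cons_self)
  have hp : P.head hP ∈ pr.1 := by
    subst h1
    rcases pr1 : pr.1 with _ | ⟨a, t⟩
    · exact absurd pr1 hne1
    · simp [pr1]
  have hq : Q.head hQ ∈ pr.2 := by
    subst h2
    rcases pr2 : pr.2 with _ | ⟨a, t⟩
    · exact absurd pr2 hne2
    · simp [pr2]
  exact le_trans (dist_le_pairCost hp hq) (le_max_left _ _)

lemma walkCost_eq_zero {d : ℕ} (hs : Subsingleton (Pt d)) (ω : List (List (Pt d) × List (Pt d))) :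
    walkCost ω = 0 := by
  refine le_antisymm (foldr_max_le_of_forall ?_) (walkCost_nonneg ω)
  rintro x hx
  simp only [List.mem_map] at hx
  obtain ⟨pr, -, rfl⟩ := hx
  refine foldr_max_le_of_forall ?_
  rintro y hy
  simp only [List.mem_map] at hy
  obtain ⟨p, -, rfl⟩ := hy
  refine foldr_max_le_of_forall ?_
  rintro z hz
  simp only [List.mem_map] at hz
  obtain ⟨q, -, rfl⟩ := hz
  rw [hs.elim p q, dist_self]

lemma restrict {d : ℕ} : ∀ (ω : List (List (Pt d) × List (Pt d))) (A P' B Γ : List (Pt d)),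
    P' ≠ [] → IsPairedWalk ω (A ++ P' ++ B) Γ →
    ∃ Γ'' ω', Γ'' ≠ [] ∧ Γ''.length ≤ Γ.length ∧ IsPairedWalk ω' P' Γ'' ∧
      walkCost ω' ≤ walkCost ω := by
  intro ω
  induction ω with
  | nil =>
    intro A P' B Γ hP' ⟨h1, h2, h3⟩
    simp at h1
    exact (hP' h1.2.1).elim
  | cons pr rest ih =>
    intro A P' B Γ hP' ⟨h1, h2, h3⟩
    simp only [List.map_cons, List.flatten_cons] at h1 h2
    obtain ⟨hne1, hne2, hsing⟩ := h3 pr (List.mem_cons_self)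
    have h3' : ∀ q ∈ rest, q.1 ≠ [] ∧ q.2 ≠ [] ∧ (q.1.length = 1 ∨ q.2.length = 1) :=
      fun q hq => h3 q (List.mem_cons_of_mem _ hq)
    set F := (rest.map Prod.fst).flatten with hF
    set Fq := (rest.map Prod.snd).flatten with hFq
    set n := pr.1.length with hn
    clear_value n
    have hnpos : 0 < n := by rw [hn]; exact List.length_pos_iff.mpr hne1
    have htake : pr.1 = (A ++ P' ++ B).take n := by
      rw [← h1, hn, List.take_left]
    have hdrop : F = (A ++ P' ++ B).drop n := by
      rw [← h1, hn]; simp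
    rcases le_or_gt n A.length with hnA | hnA
    · -- block entirely inside A
      have hFeq : F = A.drop n ++ P' ++ B := by
        rw [hdrop, List.append_assoc, List.drop_append_of_le_length hnA, List.append_assoc]
      obtain ⟨Γ'', ω', hg1, hg2, hg3, hg4⟩ :=
        ih (A.drop n) P' B Fq hP' ⟨by rw [← hF]; rw [hFeq], rfl, h3'⟩
      refine ⟨Γ'', ω', hg1, ?_, hg3, le_trans hg4 (le_max_right _ _)⟩
      calc Γ''.length ≤ Fq.length := hg2
        _ ≤ Γ.length := by rw [← h2]; simp
    · rcases lt_or_ge n (A.length + P'.length) with hnAP | hnAP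
      · -- block ends strictly inside P'
        set m := n - A.length with hm
        clear_value m
        have hmpos : 0 < m := by rw [hm]; exact Nat.sub_pos_of_lt hnA
        have hmlt : m < P'.length := by omega
        have hpr1 : pr.1 = A ++ P'.take m := by
          rw [htake, List.append_assoc, List.take_append,
            List.take_of_length_le (le_of_lt hnA), ← hm,
            List.take_append_of_le_length (le_of_lt hmlt)]
        have hFeq : F = [] ++ P'.drop m ++ B := by
          rw [hdrop, List.append_assoc, List.drop_append,
            List.drop_of_length_le (le_of_lt hnA), ← hm,
            List.drop_append_of_le_length (le_of_lt hmlt)]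
          simp
        have hP2 : P'.drop m ≠ [] := by
          intro h
          have := List.length_drop (i := m) (l := P')
          rw [h] at this
          simp at this
          omega
        obtain ⟨Γ'', ω', hg1, hg2, hg3, hg4⟩ :=
          ih [] (P'.drop m) B Fq hP2 ⟨by rw [← hF]; rw [hFeq], rfl, h3'⟩
        obtain ⟨hw1, hw2, hw3⟩ := hg3
        refine ⟨pr.2 ++ Γ'', (P'.take m, pr.2) :: ω', by simp [hne2], ?_, ⟨?_, ?_, ?_⟩, ?_⟩
        · rw [← h2]
          simp only [List.length_append]
          exact Nat.add_le_add_left hg2 _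
        · simp only [List.map_cons, List.flatten_cons, hw1]
          exact List.take_append_drop m P'
        · simp only [List.map_cons, List.flatten_cons, hw2]
        · intro q hq
          rcases List.mem_cons.mp hq with h | h
          · subst h
            refine ⟨?_, hne2, ?_⟩
            · intro hnil
              have hlen := congrArg List.length hnil
              simp only [List.length_take, List.length_nil] at hlen
              omega
            rcases hsing with h | h
            · left
              simp only [List.length_take]
              omega
            · right; exact h
          · exact hw3 q h
        · rw [walkCost_cons, walkCost_cons]
          refine max_le_max ?_ hg4
          calc pairCost (P'.take m) pr.2 ≤ pairCost (A ++ P'.take m) pr.2 := pairCost_suffix _ _ _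
            _ = pairCost pr.1 pr.2 := by rw [← hpr1]
      · -- block covers all of P'
        have hpr1 : pr.1 = (A ++ P') ++ pr.1.drop (A.length + P'.length) := by
          nth_rewrite 1 [← List.take_append_drop (A.length + P'.length) pr.1]
          congr 1
          rw [htake, List.take_take, min_eq_left hnAP, List.take_left']
          simp
        refine ⟨pr.2, [(P', pr.2)], hne2, ?_, ⟨by simp, by simp, ?_⟩, ?_⟩
        · rw [← h2]; simp
        · intro q hq
          simp only [List.mem_singleton] at hq
          subst hq
          refine ⟨hP', hne2, ?_⟩
          rcases hsing with h | h
          · left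
            have h1' : 1 ≤ P'.length := List.length_pos_iff.mpr hP'
            show P'.length = 1
            omega
          · right; exact h
        · have : pairCost P' pr.2 ≤ pairCost pr.1 pr.2 := by
            calc pairCost P' pr.2 ≤ pairCost (A ++ P') pr.2 := pairCost_suffix _ _ _
              _ ≤ pairCost ((A ++ P') ++ pr.1.drop (A.length + P'.length)) pr.2 :=
                pairCost_prefix _ _ _
              _ = pairCost pr.1 pr.2 := by rw [← hpr1]
          rw [walkCost_cons]
          refine le_trans ?_ (le_trans this (le_max_left _ _))
          unfold walkCost
          simp [pairCost_nonneg]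

/-- If `P'` is a contiguous subcurve of `P` and `Γ'` is a `(k,γ)`-simplification of `P'`,
then `dFr P' Γ' ≤ γ · dFr P Γ` for every curve `Γ` of length at most `k`. -/
theorem subcurve_simplification {d : ℕ} (k : ℕ) (γ : ℝ)
    (P P' : List (Pt d)) (hP' : P' ≠ []) (A B : List (Pt d)) (hsub : P = A ++ P' ++ B)
    (Γ' : List (Pt d)) (hΓ' : IsSimplification k γ P' Γ') :
    ∀ Γ : List (Pt d), Γ ≠ [] → Γ.length ≤ k → dFr P' Γ' ≤ γ * dFr P Γ := by
  intro Γ hΓ hΓk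
  obtain ⟨hΓ'ne, hΓ'len, hsimp⟩ := hΓ'
  have hPne : P ≠ [] := by
    rw [hsub]
    simp [hP']
  have hdfr0 : 0 ≤ dFr P' Γ' := dFr_nonneg _ _ hP' hΓ'ne
  rcases lt_trichotomy γ 0 with hγ | hγ | hγ
  · rcases subsingleton_or_nontrivial (Pt d) with hs | hs
    · have hP'Γ' : dFr P' Γ' ≤ 0 := by
        obtain ⟨ω, hω⟩ := exists_walk P' Γ' hP' hΓ'ne
        have h := dFr_le_walkCost hω
        rwa [walkCost_eq_zero hs] at h
      have hPΓ0 : dFr P Γ = 0 := by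
        obtain ⟨ω, hω⟩ := exists_walk P Γ hPne hΓ
        have h := dFr_le_walkCost hω
        rw [walkCost_eq_zero hs] at h
        exact le_antisymm h (dFr_nonneg _ _ hPne hΓ)
      rw [hPΓ0, mul_zero]
      exact hP'Γ'
    · exfalso
      obtain ⟨z, hz⟩ := exists_ne (P'.head hP')
      have hk1 : 1 ≤ k := le_trans (List.length_pos_iff.mpr hΓ'ne) hΓ'len
      have h1 : dFr P' Γ' ≤ γ * dFr P' [z] := hsimp [z] (by simp) (by simpa)
      have h2 : dist (P'.head hP') z ≤ dFr P' [z] := by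
        simpa using dist_head_le_dFr hP' (show [z] ≠ [] by simp)
      have h3 : 0 < dist (P'.head hP') z := dist_pos.mpr (Ne.symm hz)
      nlinarith
  · subst hγ
    have h1 : dFr P' Γ' ≤ 0 * dFr P' Γ' := hsimp Γ' hΓ'ne hΓ'len
    rw [zero_mul] at h1 ⊢
    exact h1
  · obtain ⟨ω0, hω0⟩ := exists_walk P Γ hPne hΓ
    have key : dFr P' Γ' / γ ≤ dFr P Γ := by
      unfold dFr
      refine le_csInf ⟨_, ω0, hω0, rfl⟩ ?_
      rintro c ⟨ω, hω, rfl⟩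
      rw [hsub] at hω
      obtain ⟨Γ'', ω', hne, hlen, hwalk, hcost⟩ := restrict ω A P' B Γ hP' hω
      have h1 : dFr P' Γ'' ≤ walkCost ω := le_trans (dFr_le_walkCost hwalk) hcost
      have h2 : dFr P' Γ' ≤ γ * dFr P' Γ'' := hsimp Γ'' hne (le_trans hlen hΓk)
      rw [div_le_iff₀ hγ]
      calc dFr P' Γ' ≤ γ * dFr P' Γ'' := h2
        _ ≤ γ * walkCost ω := mul_le_mul_of_nonneg_left h1 (le_of_lt hγ)
        _ = walkCost ω * γ := mul_comm _ _
    rw [div_le_iff₀ hγ] at key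
    linarith [key, mul_comm (dFr P Γ) γ]
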